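/- arXiv:math/0409511 — 2 statements merged into one kernel-verified Lean document; each statement's English description precedes it below -/
import Mathlib

section
/- If P(a) = Σ_{r=1}^N t_r a t_r* = Σ_{s=1}^M s_s a s_s* are two Kraus decompositions of the same completely positive map P on M_n(ℂ), then the complex linear span of {t_1, ..., t_N} equals the complex linear span of {s_1, ..., s_M}. In particular the dimension of this span, called the index d(P), depends only on P. -/
/-!
For a linear functional `f` on `M_n(ℂ)` with coefficients `f(E_ij)`, the quantity
`∑_r |f(t_r)|²` is a Hermitian form in these coefficients whose matrix consists of the entries
of `P(E_jl) = ∑_r t_r E_jl t_r*`; so it depends only on `P`. Since a sum of squares vanishes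
only termwise, `f` kills every `t_r` iff it kills every `s_r`: the two families have the same
annihilator, hence the same span.
-/

open Matrix

open scoped ComplexOrder

namespace Submodule

variable {K V ι κ : Type*} [Field K] [StarRing K] [PartialOrder K] [StarOrderedRing K]
  [AddCommGroup V] [Module K V] [Fintype ι] [Fintype κ]

theorem span_range_le_of_forall_dual_sum_mul_star_eq (u : ι → V) (v : κ → V)
    (h : ∀ f : V →ₗ[K] K, ∑ i, f (u i) * star (f (u i)) = ∑ j, f (v j) * star (f (v j))) :
    span K (Set.range u) ≤ span K (Set.range v) := by
  refine span_le.2 <| Set.range_subset_iff.2 fun i => ?_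
  by_contra hi
  obtain ⟨f, hfi, hf⟩ := exists_le_ker_of_notMem hi
  have hv : ∀ j, f (v j) = 0 := fun j => hf (subset_span ⟨j, rfl⟩)
  have hu : (fun i => f (u i)) = 0 := by
    rw [← dotProduct_self_star_eq_zero]
    simpa [dotProduct, hv] using h f
  exact hfi (congrFun hu i)

theorem span_range_eq_of_forall_dual_sum_mul_star_eq (u : ι → V) (v : κ → V)
    (h : ∀ f : V →ₗ[K] K, ∑ i, f (u i) * star (f (u i)) = ∑ j, f (v j) * star (f (v j))) :
    span K (Set.range u) = span K (Set.range v) :=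
  le_antisymm (span_range_le_of_forall_dual_sum_mul_star_eq u v h)
    (span_range_le_of_forall_dual_sum_mul_star_eq v u fun f => (h f).symm)

end Submodule

namespace Matrix

variable {R l m n o ι : Type*} [CommSemiring R] [Fintype m] [Fintype n]
  [DecidableEq m] [DecidableEq n]

theorem mul_single_one_mul_conjTranspose_apply [StarRing R]
    (A : Matrix l m R) (B : Matrix o n R) (i : l) (j : m) (k : n) (p : o) :
    (A * single j k (1 : R) * Bᴴ) i p = A i j * star (B p k) := by
  simp [mul_apply, single_apply, ite_and]

theorem linearMap_apply_eq_sum (f : Matrix m n R →ₗ[R] R) (a : Matrix m n R) :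
    f a = ∑ p : m × n, a p.1 p.2 * f (single p.1 p.2 1) := by
  conv_lhs => rw [matrix_eq_sum_single a, ← Fintype.sum_prod_type']
  refine (map_sum f _ _).trans (Finset.sum_congr rfl fun p _ => ?_)
  rw [← smul_eq_mul, ← map_smul, smul_single, smul_eq_mul, mul_one]

theorem sum_map_mul_star_map_eq [StarRing R] [Fintype ι]
    (f : Matrix m n R →ₗ[R] R) (t : ι → Matrix m n R) :
    ∑ r, f (t r) * star (f (t r)) = ∑ p : m × n, ∑ q : m × n,
      f (single p.1 p.2 1) * star (f (single q.1 q.2 1)) *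
        (∑ r, t r * single p.2 q.2 (1 : R) * (t r)ᴴ) p.1 q.1 := by
  simp only [sum_apply, mul_single_one_mul_conjTranspose_apply, Finset.mul_sum]
  have hr : ∀ r, f (t r) * star (f (t r)) = ∑ p : m × n, ∑ q : m × n,
      f (single p.1 p.2 1) * star (f (single q.1 q.2 1)) * (t r p.1 p.2 * star (t r q.1 q.2)) := by
    intro r
    rw [linearMap_apply_eq_sum f (t r), star_sum, Finset.sum_mul_sum]
    simp only [star_mul']
    exact Finset.sum_congr rfl fun p _ => Finset.sum_congr rfl fun q _ => by ring
  rw [Finset.sum_congr rfl fun r _ => hr r, Finset.sum_comm]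
  exact Finset.sum_congr rfl fun p _ => Finset.sum_comm

end Matrix

/-- Two Kraus decompositions of the same completely positive map on `M_n(ℂ)`
have the same complex linear span; in particular the index `d(P)` is
well defined. -/
theorem stmt_1 {n N M : ℕ}
    (P : Matrix (Fin n) (Fin n) ℂ →ₗ[ℂ] Matrix (Fin n) (Fin n) ℂ)
    (t : Fin N → Matrix (Fin n) (Fin n) ℂ)
    (s : Fin M → Matrix (Fin n) (Fin n) ℂ)
    (ht : ∀ a : Matrix (Fin n) (Fin n) ℂ, P a = ∑ r, t r * a * (t r)ᴴ)
    (hs : ∀ a : Matrix (Fin n) (Fin n) ℂ, P a = ∑ r, s r * a * (s r)ᴴ) :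
    Submodule.span ℂ (Set.range t) = Submodule.span ℂ (Set.range s) := by
  have hkraus : ∀ a, ∑ r, t r * a * (t r)ᴴ = ∑ r, s r * a * (s r)ᴴ :=
    fun a => (ht a).symm.trans (hs a)
  refine Submodule.span_range_eq_of_forall_dual_sum_mul_star_eq t s fun f => ?_
  rw [sum_map_mul_star_map_eq f t, sum_map_mul_star_map_eq f s]
  simp only [hkraus]
end

section
/- Let P be a completely positive map on M_n(ℂ). Then the Choi matrix of P is positive semidefinite, and conversely if the Choi matrix Σ_{i,k} E_{ik} ⊗ P(E_{ik}) is positive semidefinite then P admits a Kraus decomposition P(a) = Σ_r t_r a t_r* with at most n² matrices t_r. -/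
open Matrix ComplexOrder

/-- A linear map `P` on `M_n(ℂ)` is completely positive if for every `k` the
induced map `P ⊗ id` on `M_n(ℂ) ⊗ M_k(ℂ)` preserves positive semidefiniteness. -/
def IsCompletelyPositive {n : ℕ}
    (P : Matrix (Fin n) (Fin n) ℂ →ₗ[ℂ] Matrix (Fin n) (Fin n) ℂ) : Prop :=
  ∀ (k : ℕ) (M : Matrix (Fin n × Fin k) (Fin n × Fin k) ℂ), M.PosSemidef →
    (Matrix.of fun a b : Fin n × Fin k =>
      P (Matrix.of fun i j : Fin n => M (i, a.2) (j, b.2)) a.1 b.1).PosSemidef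

/-- The Choi matrix of a map `P : M_n(ℂ) → M_n(ℂ)`. -/
def choiMatrix {n : ℕ} (P : Matrix (Fin n) (Fin n) ℂ → Matrix (Fin n) (Fin n) ℂ) :
    Matrix (Fin n × Fin n) (Fin n × Fin n) ℂ :=
  Matrix.of fun p q => P (Matrix.single p.1 q.1 (1 : ℂ)) p.2 q.2

/-!
Up to swapping the two tensor factors, the Choi matrix of `P` is the image under `P ⊗ id` of the
rank-one positive matrix `ω ω*`, where `ω = ∑ᵢ eᵢ ⊗ eᵢ`; so it is positive semidefinite when `P`
is completely positive. Conversely, a positive semidefinite Choi matrix factors as `Bᴴ * B` with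
`B` square of size `n²`. Reading each row of `B` as an `n × n` matrix `t_r` gives a Kraus map
`a ↦ ∑ r, t_r * a * t_rᴴ` with the same Choi matrix as `P`, and a linear map is determined by its
Choi matrix, since the Choi matrix lists its values on the matrix units.
-/

section Kraus

variable {R m ι : Type*} [CommSemiring R] [StarRing R] [Fintype m] [Fintype ι]

def krausMap (t : ι → Matrix m m R) : Matrix m m R →ₗ[R] Matrix m m R :=
  ∑ r, LinearMap.mulLeft R (t r) ∘ₗ LinearMap.mulRight R (t r)ᴴ

@[simp]
lemma krausMap_apply (t : ι → Matrix m m R) (a : Matrix m m R) :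
    krausMap t a = ∑ r, t r * a * (t r)ᴴ := by
  simp [krausMap, mul_assoc]

end Kraus

section Choi

variable {n : ℕ}

lemma choiMatrix_injective :
    Function.Injective fun P : Matrix (Fin n) (Fin n) ℂ →ₗ[ℂ] Matrix (Fin n) (Fin n) ℂ =>
      choiMatrix P := by
  intro P Q h
  refine Matrix.ext_linearMap (h := fun i j => LinearMap.ext_ring ?_)
  ext p q
  exact congrFun (congrFun h (i, p)) (j, q)

lemma choiMatrix_krausMap_eq_conjTranspose_mul_self {ι : Type*} [Fintype ι]
    (B : Matrix ι (Fin n × Fin n) ℂ) :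
    choiMatrix (krausMap fun r => of fun p i => star (B r (i, p))) = Bᴴ * B := by
  ext ⟨i, p⟩ ⟨j, q⟩
  simp [choiMatrix, Matrix.sum_apply, Matrix.mul_apply, Matrix.single, ite_and, mul_comm]

lemma IsCompletelyPositive.choiMatrix_posSemidef
    {P : Matrix (Fin n) (Fin n) ℂ →ₗ[ℂ] Matrix (Fin n) (Fin n) ℂ}
    (hP : IsCompletelyPositive P) : (choiMatrix P).PosSemidef := by
  let ω : Fin n × Fin n → ℂ := fun p => if p.1 = p.2 then 1 else 0
  have hblock (a b : Fin n) :
      (of fun i j => vecMulVec ω (star ω) (i, a) (j, b)) = single a b 1 := by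
    ext i j
    simp only [ω, vecMulVec, single, of_apply, Pi.star_apply]
    split_ifs <;> simp_all
  have h := hP n _ (posSemidef_vecMulVec_self_star ω)
  simp_rw [hblock] at h
  exact h.submatrix Prod.swap

lemma exists_krausMap_eq_of_choiMatrix_posSemidef
    {P : Matrix (Fin n) (Fin n) ℂ →ₗ[ℂ] Matrix (Fin n) (Fin n) ℂ}
    (hP : (choiMatrix P).PosSemidef) :
    ∃ t : Fin (n ^ 2) → Matrix (Fin n) (Fin n) ℂ, P = krausMap t := by
  open scoped MatrixOrder in
  obtain ⟨B, hB⟩ := CStarAlgebra.nonneg_iff_eq_star_mul_self.mp hP.nonneg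
  let e : Fin (n ^ 2) ≃ Fin n × Fin n := (finCongr (sq n)).trans finProdFinEquiv.symm
  refine ⟨fun r => of fun p i => star (B.submatrix e id r (i, p)), choiMatrix_injective ?_⟩
  dsimp only
  rw [choiMatrix_krausMap_eq_conjTranspose_mul_self, conjTranspose_submatrix,
    submatrix_mul_equiv, submatrix_id_id, hB, star_eq_conjTranspose]

end Choi

/-- Choi's theorem: if `P` is completely positive then its Choi matrix is
positive semidefinite; conversely, if the Choi matrix is positive semidefinite
then `P` admits a Kraus decomposition with at most `n²` Kraus operators. -/
theorem stmt_11 {n : ℕ}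
    (P : Matrix (Fin n) (Fin n) ℂ →ₗ[ℂ] Matrix (Fin n) (Fin n) ℂ) :
    (IsCompletelyPositive P → (choiMatrix fun a => P a).PosSemidef) ∧
    ((choiMatrix fun a => P a).PosSemidef →
      ∃ t : Fin (n ^ 2) → Matrix (Fin n) (Fin n) ℂ,
        ∀ a : Matrix (Fin n) (Fin n) ℂ, P a = ∑ r, t r * a * (t r)ᴴ) := by
  refine ⟨IsCompletelyPositive.choiMatrix_posSemidef, fun hP => ?_⟩
  obtain ⟨t, rfl⟩ := exists_krausMap_eq_of_choiMatrix_posSemidef hP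
  exact ⟨t, krausMap_apply t⟩
end
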